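/- arXiv:2202.04398 — 5 statements merged into one kernel-verified Lean document; each statement's English description precedes it below -/
import Mathlib

section
/- Let p > 2 and q ≥ 1. For all real numbers a, b, one has J_q(a-b)·(J_p(a)-J_p(b)) ≥ (p-1)·(q/(p-2+q))^q · | |a|^((p-2)/q)·a - |b|^((p-2)/q)·b |^q, where J_r(t) = |t|^(r-2)·t. -/
/-!
Put `c = (p - 2) / q` and assume `b < a` (the inequality is symmetric in `a, b` because `J` is odd).
Since `(|t|^c t)' = (c + 1) |t|^c`, the fundamental theorem of calculus gives
`|a|^c a - |b|^c b = (c + 1) ∫_b^a |t|^c` and `J_p a - J_p b = (p - 1) ∫_b^a |t|^(p-2)`.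
Jensen's inequality for `x ↦ x^q` on `[b, a]` bounds `(∫_b^a |t|^c)^q` by
`(a - b)^(q-1) ∫_b^a |t|^(cq)`, and `(a - b)^(q-1) = J_q (a - b)`,
while `q / (p - 2 + q) = 1 / (c + 1)`.
-/

open Real

/-- `J r t = |t|^(r-2) · t`. -/
noncomputable def J (r t : ℝ) : ℝ := |t| ^ (r - 2) * t

open MeasureTheory Set

theorem hasDerivAt_abs_rpow_mul_self (c : ℝ) {x : ℝ} (hx : x ≠ 0) :
    HasDerivAt (fun t => |t| ^ c * t) ((c + 1) * |x| ^ c) x := by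
  have habs : |x| ≠ 0 := abs_ne_zero.mpr hx
  refine (((hasDerivAt_abs hx).rpow_const (Or.inl habs)).mul (hasDerivAt_id' x)).congr_deriv ?_
  have hsign : (SignType.sign x : ℝ) * x = |x| := sign_mul_self x
  rw [rpow_sub_one habs]
  field_simp
  linear_combination c * hsign

theorem abs_rpow_mul_self_sub_eq_integral {c : ℝ} (hc : 0 ≤ c) (a b : ℝ) :
    |a| ^ c * a - |b| ^ c * b = (c + 1) * ∫ t in b..a, |t| ^ c := by
  have hcont : Continuous fun t : ℝ => |t| ^ c := continuous_abs.rpow_const fun _ => Or.inr hc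
  rw [← intervalIntegral.integral_const_mul,
    integral_eq_of_hasDerivAt_off_countable (fun t => |t| ^ c * t) _ (countable_singleton 0)
      ((hcont.mul continuous_id').continuousOn)
      (fun x hx => hasDerivAt_abs_rpow_mul_self c hx.2)
      ((continuous_const.mul hcont).intervalIntegrable b a)]

theorem rpow_intervalIntegral_le {f : ℝ → ℝ} {a b q : ℝ} (hab : a ≤ b) (hq : 1 ≤ q)
    (hf₀ : 0 ≤ f) (hf : IntervalIntegrable f volume a b)
    (hfq : IntervalIntegrable (fun t => f t ^ q) volume a b) :
    (∫ t in a..b, f t) ^ q ≤ (b - a) ^ (q - 1) * ∫ t in a..b, f t ^ q := by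
  rcases hab.eq_or_lt with rfl | hab
  · simp [zero_rpow (by linarith : q ≠ 0)]
  have hvol : volume (Ioc a b) = ENNReal.ofReal (b - a) := volume_Ioc
  have hba : 0 < b - a := sub_pos.mpr hab
  have jensen := (convexOn_rpow hq).map_set_average_le
    (fun x _ => (continuousAt_rpow_const x q (Or.inr (by linarith))).continuousWithinAt)
    isClosed_Ici (by simp [hvol, hab]) (by simp [hvol])
    (Filter.Eventually.of_forall hf₀)
    ((intervalIntegrable_iff_integrableOn_Ioc_of_le hab.le).1 hf)
    ((intervalIntegrable_iff_integrableOn_Ioc_of_le hab.le).1 hfq)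
  simp only [setAverage_eq, measureReal_def, hvol, ENNReal.toReal_ofReal hba.le, smul_eq_mul,
    ← intervalIntegral.integral_of_le hab.le] at jensen
  have hI : 0 ≤ ∫ t in a..b, f t := intervalIntegral.integral_nonneg hab.le fun t _ => hf₀ t
  calc (∫ t in a..b, f t) ^ q = (b - a) ^ q * ((b - a)⁻¹ * ∫ t in a..b, f t) ^ q := by
        rw [mul_rpow (by positivity) hI, inv_rpow hba.le, ← mul_assoc,
          mul_inv_cancel₀ (rpow_pos_of_pos hba q).ne', one_mul]
    _ ≤ (b - a) ^ q * ((b - a)⁻¹ * ∫ t in a..b, f t ^ q) := by gcongr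
    _ = (b - a) ^ (q - 1) * ∫ t in a..b, f t ^ q := by
        rw [rpow_sub_one hba.ne']; ring

theorem J_neg (r t : ℝ) : J r (-t) = -J r t := by
  simp [J]

theorem J_of_pos {r t : ℝ} (ht : 0 < t) : J r t = t ^ (r - 1) := by
  rw [J, abs_of_pos ht, show r - 1 = r - 2 + 1 by ring, rpow_add_one ht.ne']

theorem le_J_sub_mul_J_sub_of_lt {p q a b : ℝ} (hp : 2 ≤ p) (hq : 1 ≤ q) (hab : b < a) :
    (p - 1) * (q / (p - 2 + q)) ^ q *
        |(|a| ^ ((p - 2) / q) * a - |b| ^ ((p - 2) / q) * b)| ^ q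
      ≤ J q (a - b) * (J p a - J p b) := by
  have hq₀ : 0 < q := by linarith
  set c := (p - 2) / q
  have hc : 0 ≤ c := by positivity
  set I := ∫ t in b..a, |t| ^ c
  have hI : 0 ≤ I := intervalIntegral.integral_nonneg hab.le fun t _ => by positivity
  have hA : |(|a| ^ c * a - |b| ^ c * b)| = (c + 1) * I := by
    rw [abs_rpow_mul_self_sub_eq_integral hc, abs_of_nonneg (by positivity)]
  have hJp : J p a - J p b = (p - 1) * ∫ t in b..a, (|t| ^ c) ^ q := by
    simp_rw [J, abs_rpow_mul_self_sub_eq_integral (by linarith : 0 ≤ p - 2),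
      ← rpow_mul (abs_nonneg _), c, div_mul_cancel₀ _ hq₀.ne']
    ring
  have hconst : q / (p - 2 + q) * (c + 1) = 1 := by
    have : p - 2 + q ≠ 0 := by linarith
    simp only [c]
    field_simp
  have hcont : Continuous fun t : ℝ => |t| ^ c := continuous_abs.rpow_const fun _ => Or.inr hc
  have jensen := rpow_intervalIntegral_le hab.le hq (fun t => by positivity)
    (hcont.intervalIntegrable b a)
    ((hcont.rpow_const fun _ => Or.inr hq₀.le).intervalIntegrable b a)
  calc (p - 1) * (q / (p - 2 + q)) ^ q * |(|a| ^ c * a - |b| ^ c * b)| ^ q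
      = (p - 1) * (q / (p - 2 + q) * (c + 1)) ^ q * I ^ q := by
        rw [hA, mul_rpow (by positivity) hI, mul_rpow (by positivity) (by positivity)]
        ring
    _ = (p - 1) * I ^ q := by rw [hconst, one_rpow, mul_one]
    _ ≤ (p - 1) * ((a - b) ^ (q - 1) * ∫ t in b..a, (|t| ^ c) ^ q) := by gcongr; linarith
    _ = J q (a - b) * (J p a - J p b) := by rw [J_of_pos (sub_pos.2 hab), hJp]; ring

theorem stmt0 (p q a b : ℝ) (hp : 2 < p) (hq : 1 ≤ q) :
    (p - 1) * (q / (p - 2 + q)) ^ q *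
        |(|a| ^ ((p - 2) / q) * a - |b| ^ ((p - 2) / q) * b)| ^ q
      ≤ J q (a - b) * (J p a - J p b) := by
  wlog hab : b ≤ a generalizing a b
  · have hJ : J q (b - a) * (J p b - J p a) = J q (a - b) * (J p a - J p b) := by
      rw [← neg_sub a b, J_neg]
      ring
    simpa only [abs_sub_comm, hJ] using this b a (le_of_not_ge hab)
  rcases hab.eq_or_lt with rfl | hab
  · simp [J, zero_rpow (by linarith : q ≠ 0)]
  · exact le_J_sub_mul_J_sub_of_lt hp.le hq hab
end

section
/- Let 1 < p < 2 and a, b ∈ ℝ^n with (a,b) ≠ (0,0). Then (p-1)·|a-b|²/(|a|+|b|)^(2-p) ≤ (|a|^(p-2)·a - |b|^(p-2)·b)·(a-b), where · denotes the Euclidean inner product. -/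
open Real RealInnerProductSpace

/-- Tangent line inequality for the concave function `x ^ (p-1)`. -/
lemma tangent_aux (p : ℝ) (hp1 : 1 < p) (hp2 : p < 2) (α β : ℝ)
    (hβ : 0 < β) (hβα : β ≤ α) :
    β ^ (p - 2) * β ≤ α ^ (p - 2) * α + (p - 1) * α ^ (p - 2) * (β - α) := by
  have hα : 0 < α := lt_of_lt_of_le hβ hβα
  have hs : -1 ≤ β / α - 1 := by
    have : 0 < β / α := div_pos hβ hα
    linarith
  have hb := rpow_one_add_le_one_add_mul_self hs (by linarith : (0:ℝ) ≤ p - 1)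
    (by linarith : p - 1 ≤ 1)
  rw [show 1 + (β / α - 1) = β / α by ring] at hb
  have hdiv : (β / α) ^ (p - 1) = β ^ (p - 1) / α ^ (p - 1) :=
    Real.div_rpow hβ.le hα.le _
  have hAp : (0:ℝ) < α ^ (p - 1) := Real.rpow_pos_of_pos hα _
  have h1 : β ^ (p - 1) ≤ α ^ (p - 1) * (1 + (p - 1) * (β / α - 1)) := by
    rw [hdiv] at hb
    calc β ^ (p - 1) = α ^ (p - 1) * (β ^ (p - 1) / α ^ (p - 1)) := by
          field_simp
      _ ≤ α ^ (p - 1) * (1 + (p - 1) * (β / α - 1)) := by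
          apply mul_le_mul_of_nonneg_left hb hAp.le
  have eα : α ^ (p - 1) = α ^ (p - 2) * α := by
    rw [show p - 1 = (p - 2) + 1 by ring, Real.rpow_add hα, Real.rpow_one]
  have eβ : β ^ (p - 1) = β ^ (p - 2) * β := by
    rw [show p - 1 = (p - 2) + 1 by ring, Real.rpow_add hβ, Real.rpow_one]
  have eα2 : α ^ (p - 1) * (β / α - 1) = α ^ (p - 2) * (β - α) := by
    rw [eα]; field_simp
  calc β ^ (p - 2) * β = β ^ (p - 1) := eβ.symm
    _ ≤ α ^ (p - 1) * (1 + (p - 1) * (β / α - 1)) := h1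
    _ = α ^ (p - 1) + (p - 1) * (α ^ (p - 1) * (β / α - 1)) := by ring
    _ = α ^ (p - 2) * α + (p - 1) * α ^ (p - 2) * (β - α) := by
        rw [eα2, eα]; ring

/-- Key scalar inequality. -/
lemma key_aux (p : ℝ) (hp1 : 1 < p) (hp2 : p < 2) (α β s : ℝ)
    (hβ : 0 ≤ β) (hβα : β ≤ α) (hα : 0 < α) (hs : |s| ≤ α * β) :
    (p - 1) * (α ^ 2 + β ^ 2 - 2 * s) * (α + β) ^ (p - 2)
      ≤ α ^ (p - 2) * α ^ 2 + β ^ (p - 2) * β ^ 2 - (α ^ (p - 2) + β ^ (p - 2)) * s := by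
  rcases eq_or_lt_of_le hβ with hβ0 | hβ0
  · -- β = 0, hence s = 0
    have hs0 : s = 0 := by
      rw [← hβ0] at hs
      have := abs_nonneg s
      have h := abs_eq_zero.mp (le_antisymm (by simpa using hs) (abs_nonneg s))
      exact h
    subst hs0
    rw [← hβ0]
    simp only [mul_zero, add_zero, sub_zero, zero_mul]
    have h0 : (0:ℝ) ^ (p - 2) = 0 := Real.zero_rpow (by linarith)
    rw [h0]
    have hApos : (0:ℝ) ≤ α ^ (p - 2) := (Real.rpow_pos_of_pos hα _).le
    nlinarith [sq_nonneg α, mul_nonneg hApos (sq_nonneg α)]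
  · -- β > 0
    have hc1 : (α + β) ^ (p - 2) ≤ α ^ (p - 2) :=
      Real.rpow_le_rpow_of_nonpos hα (by linarith) (by linarith)
    have hc2 : (α + β) ^ (p - 2) ≤ β ^ (p - 2) :=
      Real.rpow_le_rpow_of_nonpos hβ0 (by linarith) (by linarith)
    have hcpos : (0:ℝ) < (α + β) ^ (p - 2) := Real.rpow_pos_of_pos (by linarith) _
    have htan := tangent_aux p hp1 hp2 α β hβ0 hβα
    have hsle : s ≤ α * β := (abs_le.mp hs).2
    have hslope : 2 * (p - 1) * (α + β) ^ (p - 2) ≤ α ^ (p - 2) + β ^ (p - 2) := by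
      nlinarith [hc1, hc2]
    -- Δ = (α-β)(Aα - Bβ) - (p-1)(α-β)² c + (αβ - s)(A + B - 2(p-1)c)
    nlinarith [mul_nonneg (sub_nonneg.2 hsle) (sub_nonneg.2 hslope),
      mul_le_mul_of_nonneg_left htan (sub_nonneg.2 hβα),
      mul_le_mul_of_nonneg_right hc1 (mul_nonneg (by linarith : (0:ℝ) ≤ p - 1) (sq_nonneg (α - β)))]

lemma helper (p : ℝ) (hp1 : 1 < p) (hp2 : p < 2)
    (n : ℕ) (a b : EuclideanSpace ℝ (Fin n)) (hba : ‖b‖ ≤ ‖a‖) (ha : 0 < ‖a‖) :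
    (p - 1) * ‖a - b‖ ^ 2 / (‖a‖ + ‖b‖) ^ (2 - p)
      ≤ ⟪(‖a‖ ^ (p - 2)) • a - (‖b‖ ^ (p - 2)) • b, a - b⟫ := by
  have hI : ⟪(‖a‖ ^ (p - 2)) • a - (‖b‖ ^ (p - 2)) • b, a - b⟫
      = ‖a‖ ^ (p - 2) * ‖a‖ ^ 2 + ‖b‖ ^ (p - 2) * ‖b‖ ^ 2
        - (‖a‖ ^ (p - 2) + ‖b‖ ^ (p - 2)) * ⟪a, b⟫ := by
    simp only [inner_sub_left, inner_sub_right, real_inner_smul_left,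
      real_inner_self_eq_norm_sq, real_inner_comm b a]
    ring
  have hD : ‖a - b‖ ^ 2 = ‖a‖ ^ 2 + ‖b‖ ^ 2 - 2 * ⟪a, b⟫ := by
    rw [norm_sub_sq_real]; ring
  have hsum : (0:ℝ) < ‖a‖ + ‖b‖ := by positivity
  have hdiv : (p - 1) * ‖a - b‖ ^ 2 / (‖a‖ + ‖b‖) ^ (2 - p)
      = (p - 1) * ‖a - b‖ ^ 2 * (‖a‖ + ‖b‖) ^ (p - 2) := by
    rw [div_eq_mul_inv, ← Real.rpow_neg hsum.le, show -(2 - p) = p - 2 by ring]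
  rw [hdiv, hI, hD]
  exact key_aux p hp1 hp2 ‖a‖ ‖b‖ ⟪a, b⟫ (norm_nonneg b) hba ha
    (abs_real_inner_le_norm a b)

theorem stmt3 (p : ℝ) (hp1 : 1 < p) (hp2 : p < 2)
    (n : ℕ) (a b : EuclideanSpace ℝ (Fin n)) (hab : ¬(a = 0 ∧ b = 0)) :
    (p - 1) * ‖a - b‖ ^ 2 / (‖a‖ + ‖b‖) ^ (2 - p)
      ≤ ⟪(‖a‖ ^ (p - 2)) • a - (‖b‖ ^ (p - 2)) • b, a - b⟫ := by
  rcases le_total ‖b‖ ‖a‖ with h | h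
  · have ha : 0 < ‖a‖ := by
      rcases eq_or_lt_of_le (norm_nonneg a) with h0 | h0
      · exfalso
        apply hab
        have ha0 : a = 0 := norm_eq_zero.mp h0.symm
        have hb0 : b = 0 := norm_eq_zero.mp (le_antisymm (h0 ▸ h) (norm_nonneg b))
        exact ⟨ha0, hb0⟩
      · exact h0
    exact helper p hp1 hp2 n a b h ha
  · have hb : 0 < ‖b‖ := by
      rcases eq_or_lt_of_le (norm_nonneg b) with h0 | h0
      · exfalso
        apply hab
        have hb0 : b = 0 := norm_eq_zero.mp h0.symm
        have ha0 : a = 0 := norm_eq_zero.mp (le_antisymm (h0 ▸ h) (norm_nonneg a))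
        exact ⟨ha0, hb0⟩
      · exact h0
    have := helper p hp1 hp2 n b a h hb
    rw [norm_sub_rev b a, add_comm ‖b‖ ‖a‖,
      show (‖b‖ ^ (p - 2)) • b - (‖a‖ ^ (p - 2)) • a
        = -((‖a‖ ^ (p - 2)) • a - (‖b‖ ^ (p - 2)) • b) from (neg_sub _ _).symm,
      show b - a = -(a - b) from (neg_sub _ _).symm, inner_neg_neg] at this
    exact this
end

section
/- Let γ ≥ 2, 1 < p < 2 and a, b, c, d ∈ ℝ with (a-c, b-d) ≠ (0,0). Then (J_γ(a-b) - J_γ(c-d))·(J_p(a-c) - J_p(b-d)) ≥ (4(γ-1)(p-1)/γ²)·| |a-b|^((γ-2)/2)·(a-b) - |c-d|^((γ-2)/2)·(c-d) |²·(|a-c| + |b-d|)^(p-2). -/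
open Real

/-!
Away from `0`, `J r` has derivative `(r - 1) |τ|^(r-2)`. Hence for `γ ≥ 2`, with
`V = J (γ/2 + 1) = |·|^((γ-2)/2) · id`, the differences `J γ s - J γ t` and `V s - V t` are
`(γ - 1) ∫ |τ|^(γ-2)` and `(γ/2) ∫ |τ|^((γ-2)/2)` over `[t, s]`, and Cauchy–Schwarz
gives `4 (γ - 1) (V s - V t)² ≤ γ² (J γ s - J γ t)(s - t)`. For `p < 2` the
derivative `(p - 1) |τ|^(p-2)` is at least `(p - 1)(|x| + |y|)^(p-2)` between `x` and `y`, so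
`(p - 1)(x - y)² (|x| + |y|)^(p-2) ≤ (J p x - J p y)(x - y)`. For `s = a - b`, `t = c - d`,
`x = a - c`, `y = b - d` we have `s - t = x - y`; multiplying the two bounds and cancelling
`(x - y)²` gives the claim.
-/

open Set Filter Topology

lemma hasDerivAt_J (r : ℝ) {τ : ℝ} (hτ : τ ≠ 0) :
    HasDerivAt (J r) ((r - 1) * |τ| ^ (r - 2)) τ := by
  have habs : |τ| ≠ 0 := abs_ne_zero.2 hτ
  have hsign : (SignType.sign τ : ℝ) * τ = |τ| := by
    rcases hτ.lt_or_gt with h | h <;> simp [h, abs_of_neg, abs_of_pos]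
  refine (((hasDerivAt_abs hτ).rpow_const (p := r - 2) (Or.inl habs)).mul
    (hasDerivAt_id' τ)).congr_deriv ?_
  calc _ = (r - 2) * (|τ| ^ (r - 2 - 1) * ((SignType.sign τ : ℝ) * τ)) + |τ| ^ (r - 2) := by
        ring
    _ = _ := by rw [hsign, rpow_sub_one habs, div_mul_cancel₀ _ habs]; ring

lemma abs_J {r : ℝ} (hr : r ≠ 1) (t : ℝ) : |J r t| = |t| ^ (r - 1) := by
  rcases eq_or_ne t 0 with rfl | ht
  · simp [J, zero_rpow (sub_ne_zero.2 hr)]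
  · rw [J, abs_mul, abs_of_nonneg (rpow_nonneg (abs_nonneg t) _),
      ← rpow_add_one (abs_ne_zero.2 ht)]
    ring_nf

lemma continuous_J {r : ℝ} (hr : 1 < r) : Continuous (J r) := by
  refine continuous_iff_continuousAt.2 fun τ => ?_
  rcases eq_or_ne τ 0 with rfl | hτ
  · have h : Tendsto (fun t : ℝ => |t| ^ (r - 1)) (𝓝 0) (𝓝 0) := by
      have := ((continuous_rpow_const (by linarith : (0 : ℝ) ≤ r - 1)).comp
        continuous_abs).tendsto 0
      simpa [Function.comp_def, zero_rpow (by linarith : r - 1 ≠ 0)] using this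
    rw [ContinuousAt, show J r 0 = 0 by simp [J]]
    exact tendsto_zero_iff_norm_tendsto_zero.2 (by simpa [abs_J hr.ne'] using h)
  · exact (hasDerivAt_J r hτ).continuousAt

lemma J_sub_J_eq_integral {r : ℝ} (hr : 2 ≤ r) (s t : ℝ) :
    J r s - J r t = (r - 1) * ∫ τ in t..s, |τ| ^ (r - 2) := by
  have hcont : Continuous fun τ : ℝ => |τ| ^ (r - 2) :=
    (continuous_rpow_const (by linarith)).comp continuous_abs
  rw [← intervalIntegral.integral_const_mul]
  exact (MeasureTheory.integral_eq_of_hasDerivAt_off_countable (J r) _ (countable_singleton 0)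
    (continuous_J (by linarith)).continuousOn (fun τ hτ => hasDerivAt_J r hτ.2)
    ((continuous_const.mul hcont).intervalIntegrable _ _)).symm

lemma sq_intervalIntegral_le {f : ℝ → ℝ} (hf : Continuous f) (a b : ℝ) :
    (∫ x in a..b, f x) ^ 2 ≤ (b - a) * ∫ x in a..b, f x ^ 2 := by
  wlog hab : a ≤ b generalizing a b
  · have := this b a (le_of_not_ge hab)
    simp only [intervalIntegral.integral_symm a b, neg_sq] at this
    linarith
  rcases hab.eq_or_lt with rfl | hlt
  · simp
  set I := ∫ x in a..b, f x
  have hsq : ∫ x in a..b, ((b - a) * f x - I) ^ 2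
      = (b - a) * ((b - a) * (∫ x in a..b, f x ^ 2) - I ^ 2) := calc
    _ = ∫ x in a..b, ((b - a) ^ 2 * f x ^ 2 - 2 * (b - a) * I * f x + I ^ 2) := by
      congr 1; ext x; ring
    _ = (b - a) ^ 2 * (∫ x in a..b, f x ^ 2) - 2 * (b - a) * I * I + (b - a) * I ^ 2 := by
      rw [intervalIntegral.integral_add, intervalIntegral.integral_sub,
        intervalIntegral.integral_const_mul, intervalIntegral.integral_const_mul,
        intervalIntegral.integral_const, smul_eq_mul]
      all_goals exact Continuous.intervalIntegrable (by fun_prop) _ _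
    _ = _ := by ring
  have hnonneg := intervalIntegral.integral_nonneg (μ := MeasureTheory.volume) hab
    fun x _ => sq_nonneg ((b - a) * f x - I)
  rw [hsq] at hnonneg
  exact sub_nonneg.1 ((mul_nonneg_iff_of_pos_left (sub_pos.2 hlt)).1 hnonneg)

lemma sq_J_half_add_one_sub_le {γ : ℝ} (hγ : 2 ≤ γ) (s t : ℝ) :
    4 * (γ - 1) * (J (γ / 2 + 1) s - J (γ / 2 + 1) t) ^ 2
      ≤ γ ^ 2 * ((J γ s - J γ t) * (s - t)) := by
  have hcs := sq_intervalIntegral_le (f := fun τ => |τ| ^ (γ / 2 + 1 - 2))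
    ((continuous_rpow_const (by linarith)).comp continuous_abs) t s
  have hsq (τ : ℝ) : (|τ| ^ (γ / 2 + 1 - 2)) ^ 2 = |τ| ^ (γ - 2) := by
    rw [← rpow_natCast, ← rpow_mul (abs_nonneg τ)]
    congr 1; push_cast; ring
  simp only [hsq] at hcs
  rw [J_sub_J_eq_integral (by linarith) s t, J_sub_J_eq_integral hγ s t]
  calc _ = (γ - 1) * γ ^ 2 * (∫ τ in t..s, |τ| ^ (γ / 2 + 1 - 2)) ^ 2 := by ring
    _ ≤ (γ - 1) * γ ^ 2 * ((s - t) * ∫ τ in t..s, |τ| ^ (γ - 2)) :=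
      mul_le_mul_of_nonneg_left hcs (by nlinarith)
    _ = _ := by ring

lemma monotoneOn_Icc_of_hasDerivAt_nonneg_of_ne {f f' : ℝ → ℝ} {a b c : ℝ} (hac : a ≤ c)
    (hcb : c ≤ b) (hf : ContinuousOn f (Icc a b))
    (hf' : ∀ x ∈ Ioo a b, x ≠ c → HasDerivAt f (f' x) x)
    (hf'₀ : ∀ x ∈ Ioo a b, x ≠ c → 0 ≤ f' x) : MonotoneOn f (Icc a b) := by
  have piece (a' b' : ℝ) (ha : a ≤ a') (hb : b' ≤ b) (hc : c ∉ Ioo a' b') :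
      MonotoneOn f (Icc a' b') := by
    have hsub : Ioo a' b' ⊆ Ioo a b := Ioo_subset_Ioo ha hb
    have hne : ∀ x ∈ Ioo a' b', x ≠ c := fun x hx h => hc (h ▸ hx)
    refine monotoneOn_of_hasDerivWithinAt_nonneg (f' := f') (convex_Icc a' b')
      (hf.mono (Icc_subset_Icc ha hb)) (fun x hx => ?_) (fun x hx => ?_) <;>
      rw [interior_Icc] at hx
    · exact (hf' x (hsub hx) (hne x hx)).hasDerivWithinAt
    · exact hf'₀ x (hsub hx) (hne x hx)
  rw [← Icc_union_Icc_eq_Icc hac hcb]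
  exact (piece a c le_rfl hcb fun h => h.2.false).union_right
    (piece c b hac le_rfl fun h => h.1.false) (isGreatest_Icc hac) (isLeast_Icc hcb)

lemma mul_sub_le_J_sub_J {p x y : ℝ} (hp1 : 1 < p) (hp2 : p ≤ 2) (hyx : y ≤ x) :
    (p - 1) * (|x| + |y|) ^ (p - 2) * (x - y) ≤ J p x - J p y := by
  set M := |x| + |y|
  set c := (p - 1) * M ^ (p - 2)
  have hM : 0 ≤ M := by positivity
  have hmono : MonotoneOn (fun τ => J p τ - c * τ) (Icc (-M) M) := by
    refine monotoneOn_Icc_of_hasDerivAt_nonneg_of_ne (c := 0)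
      (f' := fun τ => (p - 1) * |τ| ^ (p - 2) - c) (by linarith) hM
      ((continuous_J hp1).sub (continuous_const.mul continuous_id)).continuousOn
      (fun τ _ hτ => ((hasDerivAt_J p hτ).sub ((hasDerivAt_id τ).const_mul c)).congr_deriv
        (by simp))
      (fun τ hτ hτ0 => sub_nonneg.2 (mul_le_mul_of_nonneg_left ?_ (by linarith)))
    exact rpow_le_rpow_of_nonpos (abs_pos.2 hτ0) (abs_le.2 ⟨hτ.1.le, hτ.2.le⟩) (by linarith)
  have hx : x ∈ Icc (-M) M := abs_le.1 (le_add_of_nonneg_right (abs_nonneg y))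
  have hy : y ∈ Icc (-M) M := abs_le.1 (le_add_of_nonneg_left (abs_nonneg x))
  have := hmono hy hx hyx
  simp only at this
  linarith

lemma sq_sub_mul_le_J_sub_J_mul_sub {p : ℝ} (hp1 : 1 < p) (hp2 : p ≤ 2) (x y : ℝ) :
    (p - 1) * (x - y) ^ 2 * (|x| + |y|) ^ (p - 2) ≤ (J p x - J p y) * (x - y) := by
  wlog hyx : y ≤ x generalizing x y
  · have := this y x (le_of_not_ge hyx)
    rw [add_comm |y|] at this
    convert this using 1 <;> ring
  calc _ = (p - 1) * (|x| + |y|) ^ (p - 2) * (x - y) * (x - y) := by ring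
    _ ≤ _ := mul_le_mul_of_nonneg_right (mul_sub_le_J_sub_J hp1 hp2 hyx) (sub_nonneg.2 hyx)

theorem stmt4_general (p γ a b c d : ℝ) (hγ : 2 ≤ γ) (hp1 : 1 < p) (hp2 : p < 2) :
    4 * (γ - 1) * (p - 1) / γ ^ 2 *
        |(|a - b| ^ ((γ - 2) / 2) * (a - b) - |c - d| ^ ((γ - 2) / 2) * (c - d))| ^ 2 *
        (|a - c| + |b - d|) ^ (p - 2)
      ≤ (J γ (a - b) - J γ (c - d)) * (J p (a - c) - J p (b - d)) := by
  have hV (u : ℝ) : |u| ^ ((γ - 2) / 2) * u = J (γ / 2 + 1) u := by rw [J]; ring_nf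
  have hA := sq_J_half_add_one_sub_le hγ (a - b) (c - d)
  have hB := sq_sub_mul_le_J_sub_J_mul_sub hp1 hp2.le (a - c) (b - d)
  rw [show a - b - (c - d) = a - c - (b - d) by ring] at hA
  rw [hV, hV, sq_abs]
  rcases eq_or_ne (a - c - (b - d)) 0 with hδ | hδ
  · simp [show a - b = c - d by linarith]
  have key := mul_le_mul hA hB
    (mul_nonneg (mul_nonneg (by linarith) (sq_nonneg _)) (rpow_nonneg (by positivity) _))
    (le_trans (mul_nonneg (by linarith) (sq_nonneg _)) hA)
  have hγ2 : 0 < γ ^ 2 := by positivity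
  rw [div_mul_eq_mul_div, div_mul_eq_mul_div, div_le_iff₀ hγ2]
  refine le_of_mul_le_mul_right ?_ (sq_pos_of_ne_zero hδ)
  linarith

theorem stmt4 (p γ a b c d : ℝ) (hγ : 2 ≤ γ) (hp1 : 1 < p) (hp2 : p < 2)
    (h : ¬(a - c = 0 ∧ b - d = 0)) :
    4 * (γ - 1) * (p - 1) / γ ^ 2 *
        |(|a - b| ^ ((γ - 2) / 2) * (a - b) - |c - d| ^ ((γ - 2) / 2) * (c - d))| ^ 2 *
        (|a - c| + |b - d|) ^ (p - 2)
      ≤ (J γ (a - b) - J γ (c - d)) * (J p (a - c) - J p (b - d)) :=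
  stmt4_general p γ a b c d hγ hp1 hp2
end

section
/- Let 0 < s < 1, 1 < p < ∞, and let Ω ⊂ ℝ^n be open and bounded. There is a constant C = C(n,p,s) such that for every u ∈ W^{s,p}(ℝ^n) vanishing a.e. outside Ω: ‖u‖_{L^p(Ω)}^p ≤ C·|Ω|^(sp/n)·[u]_{W^{s,p}(ℝ^n)}^p. -/
open Real MeasureTheory

/-- The `p`-th power of the Gagliardo (Sobolev–Slobodeckiĭ) seminorm
`[u]_{W^{s,p}(ℝ^n)}^p`. -/
noncomputable def gagliardoP (n : ℕ) (s p : ℝ) (u : EuclideanSpace ℝ (Fin n) → ℝ) : ℝ :=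
  ∫ q : EuclideanSpace ℝ (Fin n) × EuclideanSpace ℝ (Fin n),
    |u q.1 - u q.2| ^ p / ‖q.1 - q.2‖ ^ ((n : ℝ) + s * p)

/-! Pick `R` with `|B_R| = 2|Ω|`. For every `x`, the set `B_R(x) \ Ω` then has measure at least
`|Ω|`, `u` vanishes on it and `|x - y| < R` there, so
`|u x|^p |Ω| ≤ R^(n+sp) ∫ |u x - u y|^p / |x - y|^(n+sp) dy`. Integrating over `x ∈ Ω` and
writing `R^(n+sp) = (2/|B_1|)^((n+sp)/n) |Ω|^(sp/n) |Ω|` gives the inequality with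
`C = (2/|B_1|)^((n+sp)/n)`. -/

open Metric Module
open scoped ENNReal

lemma rpow_inv_rpow_add {c m d t : ℝ} (hc : 0 ≤ c) (hm : 0 < m) (hd : d ≠ 0) :
    ((c * m) ^ d⁻¹) ^ (d + t) = c ^ ((d + t) / d) * m ^ (t / d) * m := by
  rw [← rpow_mul (by positivity), mul_rpow hc hm.le, mul_assoc, ← rpow_add_one hm.ne',
    inv_mul_eq_div, add_div, div_self hd, add_comm (1 : ℝ)]

lemma measure_le_measure_diff_of_eq_two_mul {α : Type*} [MeasurableSpace α] {μ : Measure α}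
    {s t : Set α} (hs : μ s ≠ ∞) (ht : μ t = 2 * μ s) : μ s ≤ μ (t \ s) :=
  calc μ s = 2 * μ s - μ s := by rw [two_mul, ENNReal.add_sub_cancel_right hs]
    _ = μ t - μ s := by rw [ht]
    _ ≤ μ (t \ s) := le_measure_sdiff

lemma measureReal_ball_pos {X : Type*} [PseudoMetricSpace X] [ProperSpace X] [MeasurableSpace X]
    (μ : Measure X) [μ.IsOpenPosMeasure] [IsFiniteMeasureOnCompacts μ] (x : X) {r : ℝ}
    (hr : 0 < r) : 0 < μ.real (ball x r) :=
  ENNReal.toReal_pos (measure_ball_pos μ x hr).ne' measure_ball_lt_top.ne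

section Kernel

variable {E : Type*} [NormedAddCommGroup E]

noncomputable def gagliardoKernel (a p : ℝ) (u : E → ℝ) (x y : E) : ℝ :=
  |u x - u y| ^ p / ‖x - y‖ ^ a

lemma gagliardoKernel_nonneg (a p : ℝ) (u : E → ℝ) (x y : E) :
    0 ≤ gagliardoKernel a p u x y := by
  unfold gagliardoKernel; positivity

lemma rpow_abs_le_mul_gagliardoKernel {a p R : ℝ} {u : E → ℝ} {x y : E} (ha : 0 ≤ a)
    (hp : 0 < p) (hy : u y = 0) (hxy : ‖x - y‖ ≤ R) :
    |u x| ^ p ≤ R ^ a * gagliardoKernel a p u x y := by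
  rcases eq_or_ne x y with rfl | hne
  · have hR : 0 ≤ R := (norm_nonneg _).trans hxy
    simp only [hy, abs_zero, zero_rpow hp.ne']
    exact mul_nonneg (rpow_nonneg hR a) (gagliardoKernel_nonneg a p u x x)
  have hd : 0 < ‖x - y‖ := norm_pos_iff.2 (sub_ne_zero.2 hne)
  rw [gagliardoKernel, hy, sub_zero, mul_div_assoc', le_div_iff₀ (rpow_pos_of_pos hd a),
    mul_comm (R ^ a)]
  exact mul_le_mul_of_nonneg_left (rpow_le_rpow hd.le hxy ha) (by positivity)

variable [MeasurableSpace E] [OpensMeasurableSpace E] {μ : Measure E}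

lemma ofReal_rpow_mul_measure_ball_diff_le {a p R : ℝ} {u : E → ℝ} {Ω : Set E}
    (ha : 0 ≤ a) (hp : 0 < p) (hΩ : MeasurableSet Ω) (hu0 : ∀ᵐ y ∂μ, y ∉ Ω → u y = 0) (x : E) :
    ENNReal.ofReal (|u x| ^ p) * μ (ball x R \ Ω) ≤
      ENNReal.ofReal (R ^ a) * ∫⁻ y, ENNReal.ofReal (gagliardoKernel a p u x y) ∂μ := by
  have hT : MeasurableSet (ball x R \ Ω) := measurableSet_ball.diff hΩ
  calc ENNReal.ofReal (|u x| ^ p) * μ (ball x R \ Ω)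
      = ∫⁻ _ in ball x R \ Ω, ENNReal.ofReal (|u x| ^ p) ∂μ := (setLIntegral_const _ _).symm
    _ ≤ ∫⁻ y in ball x R \ Ω, ENNReal.ofReal (R ^ a) *
          ENNReal.ofReal (gagliardoKernel a p u x y) ∂μ := by
        refine lintegral_mono_ae ?_
        filter_upwards [ae_restrict_of_ae hu0, ae_restrict_mem hT] with y hy hyT
        rw [← ENNReal.ofReal_mul' (gagliardoKernel_nonneg a p u x y)]
        refine ENNReal.ofReal_le_ofReal (rpow_abs_le_mul_gagliardoKernel ha hp (hy hyT.2) ?_)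
        rw [← dist_eq_norm, dist_comm]
        exact (mem_ball.1 hyT.1).le
    _ = ENNReal.ofReal (R ^ a) *
          ∫⁻ y in ball x R \ Ω, ENNReal.ofReal (gagliardoKernel a p u x y) ∂μ :=
        lintegral_const_mul' _ _ ENNReal.ofReal_ne_top
    _ ≤ ENNReal.ofReal (R ^ a) * ∫⁻ y, ENNReal.ofReal (gagliardoKernel a p u x y) ∂μ := by
        gcongr; exact Measure.restrict_le_self

end Kernel

section Integrated

variable {E : Type*} [NormedAddCommGroup E] [MeasurableSpace E] [BorelSpace E]
  [SecondCountableTopology E] {μ : Measure E} [SFinite μ]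

lemma lintegral_rpow_mul_measure_le_lintegral_gagliardoKernel {a p R : ℝ} {u : E → ℝ}
    {Ω : Set E} (ha : 0 ≤ a) (hp : 0 < p) (hΩ : MeasurableSet Ω) (hu : Measurable u)
    (hu0 : ∀ᵐ y ∂μ, y ∉ Ω → u y = 0) (hR : ∀ x, μ Ω ≤ μ (ball x R \ Ω)) :
    (∫⁻ x in Ω, ENNReal.ofReal (|u x| ^ p) ∂μ) * μ Ω ≤
      ENNReal.ofReal (R ^ a) *
        ∫⁻ q, ENNReal.ofReal (gagliardoKernel a p u q.1 q.2) ∂μ.prod μ := by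
  have hK : Measurable fun q : E × E => ENNReal.ofReal (gagliardoKernel a p u q.1 q.2) := by
    unfold gagliardoKernel; fun_prop
  calc (∫⁻ x in Ω, ENNReal.ofReal (|u x| ^ p) ∂μ) * μ Ω
      = ∫⁻ x in Ω, ENNReal.ofReal (|u x| ^ p) * μ Ω ∂μ :=
        (lintegral_mul_const _ (by fun_prop)).symm
    _ ≤ ∫⁻ x in Ω, ENNReal.ofReal (R ^ a) *
          ∫⁻ y, ENNReal.ofReal (gagliardoKernel a p u x y) ∂μ ∂μ := by
        refine lintegral_mono fun x => ?_
        calc ENNReal.ofReal (|u x| ^ p) * μ Ω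
            ≤ ENNReal.ofReal (|u x| ^ p) * μ (ball x R \ Ω) :=
              mul_le_mul_right (hR x) _
          _ ≤ _ := ofReal_rpow_mul_measure_ball_diff_le ha hp hΩ hu0 x
    _ = ENNReal.ofReal (R ^ a) *
          ∫⁻ x in Ω, ∫⁻ y, ENNReal.ofReal (gagliardoKernel a p u x y) ∂μ ∂μ :=
        lintegral_const_mul' _ _ ENNReal.ofReal_ne_top
    _ ≤ ENNReal.ofReal (R ^ a) *
          ∫⁻ x, ∫⁻ y, ENNReal.ofReal (gagliardoKernel a p u x y) ∂μ ∂μ := by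
        gcongr; exact Measure.restrict_le_self
    _ = ENNReal.ofReal (R ^ a) *
          ∫⁻ q, ENNReal.ofReal (gagliardoKernel a p u q.1 q.2) ∂μ.prod μ := by
        rw [lintegral_prod _ hK.aemeasurable]

end Integrated

section Haar

variable {E : Type*} [NormedAddCommGroup E] [NormedSpace ℝ E] [FiniteDimensional ℝ E]
  [MeasurableSpace E] [BorelSpace E] (μ : Measure E) [μ.IsAddHaarMeasure]

lemma addHaar_ball_div_rpow_inv_finrank [Nontrivial E] (x : E) {c : ℝ} (hc : 0 ≤ c) :
    μ (ball x ((c / μ.real (ball 0 1)) ^ (finrank ℝ E : ℝ)⁻¹)) = ENNReal.ofReal c := by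
  have hd : (finrank ℝ E : ℝ) ≠ 0 := Nat.cast_ne_zero.2 finrank_pos.ne'
  have hι := measureReal_ball_pos μ (0 : E) one_pos
  rw [Measure.addHaar_ball μ x (by positivity), ← rpow_natCast, ← rpow_mul (by positivity),
    inv_mul_cancel₀ hd, rpow_one, ← ofReal_measureReal measure_ball_lt_top.ne,
    ← ENNReal.ofReal_mul (by positivity), div_mul_cancel₀ _ hι.ne']

theorem setIntegral_rpow_abs_le_integral_gagliardoKernel [Nontrivial E] {t p : ℝ}
    (ht : 0 ≤ (finrank ℝ E : ℝ) + t) (hp : 0 < p) {Ω : Set E} {u : E → ℝ}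
    (hΩ : MeasurableSet Ω) (hΩ_fin : μ Ω ≠ ∞) (hu : Measurable u)
    (hu0 : ∀ᵐ x ∂μ, x ∉ Ω → u x = 0)
    (hK : Integrable (fun q : E × E => gagliardoKernel (finrank ℝ E + t) p u q.1 q.2)
      (μ.prod μ)) :
    ∫ x in Ω, |u x| ^ p ∂μ ≤
      (2 / μ.real (ball 0 1)) ^ ((finrank ℝ E + t) / finrank ℝ E) *
        μ.real Ω ^ (t / finrank ℝ E) *
        ∫ q, gagliardoKernel (finrank ℝ E + t) p u q.1 q.2 ∂μ.prod μ := by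
  set d : ℝ := (finrank ℝ E : ℝ)
  have hd : 0 < d := Nat.cast_pos.2 finrank_pos
  have hι := measureReal_ball_pos μ (0 : E) one_pos
  have hK_nonneg : 0 ≤ fun q : E × E => gagliardoKernel (d + t) p u q.1 q.2 :=
    fun q => gagliardoKernel_nonneg _ _ _ _ _
  rcases measureReal_nonneg.eq_or_lt with hm | hm
  · rw [Measure.restrict_eq_zero.2 ((measureReal_eq_zero_iff hΩ_fin).1 hm.symm),
      integral_zero_measure]
    have := integral_nonneg (μ := μ.prod μ) hK_nonneg
    positivity
  set m := μ.real Ω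
  set R := (2 / μ.real (ball 0 1) * m) ^ d⁻¹
  have hball : ∀ x, μ Ω ≤ μ (ball x R \ Ω) := fun x =>
    measure_le_measure_diff_of_eq_two_mul hΩ_fin (by
      simp only [R, div_mul_eq_mul_div]
      rw [addHaar_ball_div_rpow_inv_finrank μ x (by positivity), ENNReal.ofReal_mul zero_le_two,
        ofReal_measureReal hΩ_fin, ENNReal.ofReal_ofNat])
  have hlin := lintegral_rpow_mul_measure_le_lintegral_gagliardoKernel ht hp hΩ hu hu0 hball
  have hRpow : R ^ (d + t) = (2 / μ.real (ball 0 1)) ^ ((d + t) / d) * m ^ (t / d) * m :=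
    rpow_inv_rpow_add (by positivity) hm hd.ne'
  rw [integral_eq_lintegral_of_nonneg_ae (.of_forall fun x => by positivity)
      (hu.abs.pow_const p).aestronglyMeasurable,
    integral_eq_lintegral_of_nonneg_ae (.of_forall hK_nonneg) hK.aestronglyMeasurable]
  have hG_fin := (hasFiniteIntegral_iff_ofReal (.of_forall hK_nonneg)).1 hK.hasFiniteIntegral
  have hreal := ENNReal.toReal_mono (ENNReal.mul_ne_top ENNReal.ofReal_ne_top hG_fin.ne) hlin
  rw [ENNReal.toReal_mul, ENNReal.toReal_mul, ENNReal.toReal_ofReal (by positivity), hRpow,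
    ← measureReal_def] at hreal
  exact le_of_mul_le_mul_right (hreal.trans_eq (by ring)) hm

end Haar

theorem stmt15_general (n : ℕ) (hn : 0 < n) (s p : ℝ) (hs0 : 0 < s) (hp : 1 < p) :
    ∃ C : ℝ, 0 < C ∧
      ∀ (Ω : Set (EuclideanSpace ℝ (Fin n))) (u : EuclideanSpace ℝ (Fin n) → ℝ),
        IsOpen Ω → Bornology.IsBounded Ω →
        Measurable u →
        (∀ᵐ x, x ∉ Ω → u x = 0) →
        Integrable (fun x => |u x| ^ p) →
        Integrable (fun q : EuclideanSpace ℝ (Fin n) × EuclideanSpace ℝ (Fin n) =>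
          |u q.1 - u q.2| ^ p / ‖q.1 - q.2‖ ^ ((n : ℝ) + s * p)) →
        ∫ x in Ω, |u x| ^ p
          ≤ C * (volume Ω).toReal ^ (s * p / n) * gagliardoP n s p u := by
  have : Nontrivial (EuclideanSpace ℝ (Fin n)) := by
    have : Nonempty (Fin n) := ⟨⟨0, hn⟩⟩
    infer_instance
  have hp0 : 0 < p := one_pos.trans hp
  have hι := measureReal_ball_pos volume (0 : EuclideanSpace ℝ (Fin n)) one_pos
  refine ⟨(2 / volume.real (ball (0 : EuclideanSpace ℝ (Fin n)) 1)) ^ ((n + s * p) / n),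
    by positivity, fun Ω u hΩ hΩ_bdd hu hu0 _ hK => ?_⟩
  have key := setIntegral_rpow_abs_le_integral_gagliardoKernel volume (t := s * p)
    (by positivity) hp0 hΩ.measurableSet hΩ_bdd.measure_lt_top.ne hu hu0
    (by rwa [finrank_euclideanSpace_fin])
  rwa [finrank_euclideanSpace_fin] at key

theorem stmt15 (n : ℕ) (hn : 0 < n) (s p : ℝ) (hs0 : 0 < s) (hs1 : s < 1) (hp : 1 < p) :
    ∃ C : ℝ, 0 < C ∧
      ∀ (Ω : Set (EuclideanSpace ℝ (Fin n))) (u : EuclideanSpace ℝ (Fin n) → ℝ),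
        IsOpen Ω → Bornology.IsBounded Ω →
        Measurable u →
        (∀ᵐ x, x ∉ Ω → u x = 0) →
        Integrable (fun x => |u x| ^ p) →
        Integrable (fun q : EuclideanSpace ℝ (Fin n) × EuclideanSpace ℝ (Fin n) =>
          |u q.1 - u q.2| ^ p / ‖q.1 - q.2‖ ^ ((n : ℝ) + s * p)) →
        ∫ x in Ω, |u x| ^ p
          ≤ C * (volume Ω).toReal ^ (s * p / n) * gagliardoP n s p u :=
  stmt15_general n hn s p hs0 hp
end

section
/- Let 0 < s < 1, 1 < p < ∞ with sp > n, and Ω ⊂ ℝ^n open and bounded. There is C = C(n,p,s) such that for every u ∈ W^{s,p}(ℝ^n) vanishing a.e. outside Ω: ‖u‖_{L^∞(Ω)}^p ≤ C·|Ω|^(sp/n - 1)·[u]_{W^{s,p}(ℝ^n)}^p. -/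
/-!
De Giorgi iteration on the level sets `L t = {t < |u|}`. If `|u x| > t` and `|u y| ≤ t₀`, then
`|u x - u y| ≥ t - t₀`; and the kernel `‖x - y‖ ^ (-(n + s p))` integrated over the complement of a
set of measure `V` is at least `c V ^ (-s p / n)`, by comparison with the ball of measure `2 V`
around `x`. Integrating over `x ∈ L t`, `y ∉ L t₀` gives
`|L t| ≤ K (t - t₀) ^ (-p) |L t₀| ^ β` with `β = s p / n > 1` and `K = [u] ^ p / c`. Because
`β > 1`, along the levels `d (1 - 2⁻ᵏ)` this forces geometric decay, so `|L t| = 0` for every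
`t > d = (K |Ω| ^ (β - 1) 2 ^ (p β / (β - 1))) ^ (1 / p)`.
-/

open Real MeasureTheory

open Filter Topology Metric Module Function

theorem deGiorgi_step_eq {p β K A d : ℝ} (hβ : 1 < β) (hK : 0 < K) (hA : 0 < A) (hd : 0 < d)
    (hdp : d ^ p = K * A ^ (β - 1) * 2 ^ (p * β / (β - 1))) (k : ℕ) :
    K * (d * 2⁻¹ ^ (k + 1)) ^ (-p) * (A * ((2 : ℝ) ^ (-(p / (β - 1)))) ^ k) ^ β
      = A * ((2 : ℝ) ^ (-(p / (β - 1)))) ^ (k + 1) := by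
  have hβ1 : β - 1 ≠ 0 := by linarith
  have hlog := congrArg Real.log hdp
  apply Real.log_injOn_pos (Set.mem_Ioi.2 (by positivity)) (Set.mem_Ioi.2 (by positivity))
  simp (disch := positivity) only [Real.log_mul, Real.log_rpow, Real.log_pow, Real.log_inv]
    at hlog ⊢
  field_simp at hlog ⊢
  push_cast
  linear_combination -hlog

theorem eq_zero_of_deGiorgi_recursion {ψ : ℝ → ℝ} {p β K A : ℝ} (hp : 0 < p) (hβ : 1 < β)
    (hK : 0 ≤ K) (hA : 0 ≤ A) (hψ_nonneg : ∀ t, 0 ≤ ψ t)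
    (hψ_anti : AntitoneOn ψ (Set.Ici 0)) (hψ0 : ψ 0 ≤ A)
    (hrec : ∀ t₀ t, 0 ≤ t₀ → t₀ < t → ψ t ≤ K * (t - t₀) ^ (-p) * ψ t₀ ^ β) {t : ℝ}
    (ht : (K * A ^ (β - 1) * 2 ^ (p * β / (β - 1))) ^ (1 / p) < t) : ψ t = 0 := by
  refine le_antisymm ?_ (hψ_nonneg t)
  have ht0 : 0 < t := lt_of_le_of_lt (by positivity) ht
  by_cases hKA : K = 0 ∨ A = 0
  · calc ψ t ≤ K * (t - 0) ^ (-p) * ψ 0 ^ β := hrec 0 t le_rfl ht0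
      _ ≤ K * (t - 0) ^ (-p) * A ^ β := by gcongr; exact hψ_nonneg 0
      _ = 0 := by rcases hKA with rfl | rfl <;> simp [Real.zero_rpow (by linarith : β ≠ 0)]
  obtain ⟨hK0, hA0⟩ := not_or.1 hKA
  set d := (K * A ^ (β - 1) * 2 ^ (p * β / (β - 1))) ^ (1 / p) with hd_def
  set r : ℝ := 2 ^ (-(p / (β - 1)))
  have hKpos : 0 < K := hK.lt_of_ne' hK0
  have hApos : 0 < A := hA.lt_of_ne' hA0
  have hd : 0 < d := by positivity
  have hdp : d ^ p = K * A ^ (β - 1) * 2 ^ (p * β / (β - 1)) := by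
    rw [hd_def, one_div, Real.rpow_inv_rpow (by positivity) hp.ne']
  have hlevel_nonneg (k : ℕ) : 0 ≤ d * (1 - 2⁻¹ ^ k) :=
    mul_nonneg hd.le (sub_nonneg.2 (pow_le_one₀ (by norm_num) (by norm_num)))
  have hlevel (k : ℕ) : ψ (d * (1 - 2⁻¹ ^ k)) ≤ A * r ^ k := by
    induction k with
    | zero => simpa using hψ0
    | succ k ih =>
      have hgap : d * (1 - 2⁻¹ ^ (k + 1)) - d * (1 - 2⁻¹ ^ k) = d * 2⁻¹ ^ (k + 1) := by ring
      calc ψ (d * (1 - 2⁻¹ ^ (k + 1)))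
          ≤ K * (d * (1 - 2⁻¹ ^ (k + 1)) - d * (1 - 2⁻¹ ^ k)) ^ (-p) * ψ (d * (1 - 2⁻¹ ^ k)) ^ β :=
            hrec _ _ (hlevel_nonneg k) (sub_pos.1 (hgap ▸ by positivity))
        _ ≤ K * (d * 2⁻¹ ^ (k + 1)) ^ (-p) * (A * r ^ k) ^ β := by
            rw [hgap]; gcongr; exact hψ_nonneg _
        _ = A * r ^ (k + 1) := deGiorgi_step_eq hβ hKpos hApos hd hdp k
  have hr : r < 1 := Real.rpow_lt_one_of_one_lt_of_neg one_lt_two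
    (neg_neg_of_pos (div_pos hp (by linarith)))
  have hlim : Tendsto (fun k : ℕ => A * r ^ k) atTop (𝓝 0) := by
    simpa using (tendsto_pow_atTop_nhds_zero_of_lt_one (by positivity) hr).const_mul A
  refine ge_of_tendsto' hlim fun k => (hψ_anti (hlevel_nonneg k) ht0.le ?_).trans (hlevel k)
  have : d * (1 - 2⁻¹ ^ k) ≤ d := mul_le_of_le_one_right hd.le (by simp)
  linarith

section LevelSets

variable {α : Type*} [MeasurableSpace α] {μ : Measure α} {u : α → ℝ}

theorem toReal_eLpNormEssSup_le_of_measure_lt_abs_eq_zero {d : ℝ} (hd : 0 ≤ d)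
    (h : ∀ t, d < t → μ {x | t < |u x|} = 0) : (eLpNormEssSup u μ).toReal ≤ d := by
  refine le_of_forall_gt_imp_ge_of_dense fun t ht => ENNReal.toReal_le_of_le_ofReal
    (hd.trans ht.le) (eLpNormEssSup_le_of_ae_bound ?_)
  rw [ae_iff]
  simpa using h t ht

theorem eLpNormEssSup_restrict_eq_of_ae_eq_zero {Ω : Set α} (hΩ : MeasurableSet Ω)
    (h : ∀ᵐ x ∂μ, x ∉ Ω → u x = 0) : eLpNormEssSup u (μ.restrict Ω) = eLpNormEssSup u μ := by
  rw [← eLpNormEssSup_indicator_eq_eLpNormEssSup_restrict hΩ]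
  refine eLpNormEssSup_congr_ae ?_
  filter_upwards [h] with x hx
  by_cases hxΩ : x ∈ Ω <;> simp [hxΩ, hx]

theorem measure_lt_abs_le_measure_support {t : ℝ} (ht : 0 ≤ t) :
    μ {x | t < |u x|} ≤ μ (support u) :=
  measure_mono fun _ hx => abs_pos.1 (ht.trans_lt hx)

theorem antitoneOn_toReal_measure_lt_abs (hsupp : μ (support u) ≠ ⊤) :
    AntitoneOn (fun t => (μ {x | t < |u x|}).toReal) (Set.Ici 0) :=
  fun _ ht₀ _ _ ht => ENNReal.toReal_mono
    (ne_top_of_le_ne_top hsupp (measure_lt_abs_le_measure_support ht₀))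
    (measure_mono fun _ hx => ht.trans_lt hx)

theorem measure_support_le_of_ae_eq_zero {Ω : Set α} (h : ∀ᵐ x ∂μ, x ∉ Ω → u x = 0) :
    μ (support u) ≤ μ Ω :=
  measure_mono_ae (h.mono fun _ hx hxu => by_contra fun hxΩ => hxu (hx hxΩ))

end LevelSets

section Gagliardo

variable {E : Type*} [NormedAddCommGroup E] [MeasurableSpace E]

noncomputable def gagliardoLIntegral (μ : Measure E) (p a : ℝ) (u : E → ℝ) : ENNReal :=
  ∫⁻ x, ∫⁻ y, ENNReal.ofReal (|u x - u y| ^ p / ‖x - y‖ ^ a) ∂μ ∂μ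

theorem setLIntegral_levelSet_le_gagliardoLIntegral (μ : Measure E) {u : E → ℝ}
    (hu : Measurable u) {p : ℝ} (hp : 0 ≤ p) (a : ℝ) {t₀ t : ℝ} (ht : t₀ ≤ t) :
    ∫⁻ x in {x | t < |u x|}, ∫⁻ y in {y | t₀ < |u y|}ᶜ,
        ENNReal.ofReal ((t - t₀) ^ p * (‖x - y‖ ^ a)⁻¹) ∂μ ∂μ
      ≤ gagliardoLIntegral μ p a u := by
  have hmeas (c : ℝ) : MeasurableSet {x | c < |u x|} := measurableSet_lt measurable_const hu.abs
  calc _ ≤ ∫⁻ x in {x | t < |u x|}, ∫⁻ y in {y | t₀ < |u y|}ᶜ,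
        ENNReal.ofReal (|u x - u y| ^ p / ‖x - y‖ ^ a) ∂μ ∂μ := by
        refine setLIntegral_mono' (hmeas t) fun x hx => setLIntegral_mono' (hmeas t₀).compl
          fun y hy => ENNReal.ofReal_le_ofReal ?_
        have hgap : t - t₀ ≤ |u x - u y| :=
          (sub_le_sub hx.le (not_lt.1 (show ¬t₀ < |u y| from hy))).trans (abs_sub_abs_le_abs_sub _ _)
        rw [div_eq_mul_inv]
        gcongr
    _ ≤ gagliardoLIntegral μ p a u :=
        (setLIntegral_le_lintegral _ _).trans
          (lintegral_mono fun _ => setLIntegral_le_lintegral _ _)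

variable [BorelSpace E] [SecondCountableTopology E]

theorem Measurable.abs_sub_rpow_div_norm_sub_rpow {u : E → ℝ} (hu : Measurable u) (p a : ℝ) :
    Measurable fun q : E × E => |u q.1 - u q.2| ^ p / ‖q.1 - q.2‖ ^ a :=
  (((hu.comp measurable_fst).sub (hu.comp measurable_snd)).abs.pow_const p).div
    ((measurable_fst.sub measurable_snd).norm.pow_const a)

theorem lintegral_prod_eq_gagliardoLIntegral (μ : Measure E) [SFinite μ] {u : E → ℝ}
    (hu : Measurable u) (p a : ℝ) :
    ∫⁻ q : E × E, ENNReal.ofReal (|u q.1 - u q.2| ^ p / ‖q.1 - q.2‖ ^ a) ∂μ.prod μ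
      = gagliardoLIntegral μ p a u :=
  lintegral_prod _ (hu.abs_sub_rpow_div_norm_sub_rpow p a).ennreal_ofReal.aemeasurable

end Gagliardo

section Haar

theorem toReal_measure_ball_pos {E : Type*} [PseudoMetricSpace E] [ProperSpace E]
    [MeasurableSpace E] (μ : Measure E) [μ.IsOpenPosMeasure]
    [IsFiniteMeasureOnCompacts μ] (x : E) {r : ℝ} (hr : 0 < r) : 0 < (μ (ball x r)).toReal :=
  ENNReal.toReal_pos (measure_ball_pos μ x hr).ne' measure_ball_lt_top.ne

variable {E : Type*} [NormedAddCommGroup E] [NormedSpace ℝ E] [FiniteDimensional ℝ E]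
  [Nontrivial E] [MeasurableSpace E] [BorelSpace E] (μ : Measure E) [μ.IsAddHaarMeasure]

theorem addHaar_ball_rpow_eq_ofReal (x : E) {V : ℝ} (hV : 0 < V) :
    μ (ball x ((V / (μ (ball 0 1)).toReal) ^ (1 / (finrank ℝ E : ℝ)))) = ENNReal.ofReal V := by
  have hn : 0 < (finrank ℝ E : ℝ) := Nat.cast_pos.2 finrank_pos
  have hω := toReal_measure_ball_pos μ (0 : E) one_pos
  rw [Measure.addHaar_ball_of_pos μ x (by positivity), ← Real.rpow_natCast,
    ← Real.rpow_mul (by positivity), one_div_mul_cancel hn.ne', Real.rpow_one,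
    ENNReal.ofReal_div_of_pos hω, ENNReal.ofReal_toReal measure_ball_lt_top.ne,
    ENNReal.div_mul_cancel (measure_ball_pos μ 0 one_pos).ne' measure_ball_lt_top.ne]

theorem ofReal_mul_rpow_le_setLIntegral_compl_inv_norm_rpow {a : ℝ} (ha : 0 ≤ a) (x : E)
    {S : Set E} (hS0 : μ S ≠ 0) (hS : μ S ≠ ⊤) :
    ENNReal.ofReal (((μ (ball 0 1)).toReal / 2) ^ (a / finrank ℝ E) *
        (μ S).toReal ^ (1 - a / finrank ℝ E))
      ≤ ∫⁻ y in Sᶜ, ENNReal.ofReal ((‖x - y‖ ^ a)⁻¹) ∂μ := by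
  set n : ℝ := (finrank ℝ E : ℝ)
  set ω := (μ (ball (0 : E) 1)).toReal
  set V := (μ S).toReal
  have hω : 0 < ω := toReal_measure_ball_pos μ 0 one_pos
  have hV : 0 < V := ENNReal.toReal_pos hS0 hS
  -- the ball around `x` of measure `2 V` meets `Sᶜ` in measure at least `V`
  set R := (2 * V / ω) ^ (1 / n) with hR_def
  have hball : μ (ball x R) = ENNReal.ofReal (2 * V) :=
    addHaar_ball_rpow_eq_ofReal μ x (by positivity)
  have hdiff : ENNReal.ofReal V ≤ μ (ball x R \ S) := by
    calc ENNReal.ofReal V = ENNReal.ofReal (2 * V) - μ S := by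
          rw [two_mul, ENNReal.ofReal_add hV.le hV.le, ENNReal.ofReal_toReal hS,
            ENNReal.add_sub_cancel_right hS]
      _ ≤ μ (ball x R \ S) := hball ▸ le_measure_sdiff
  have hconst : (ω / 2) ^ (a / n) * V ^ (1 - a / n) = (R ^ a)⁻¹ * V := by
    rw [hR_def]
    apply Real.log_injOn_pos (Set.mem_Ioi.2 (by positivity)) (Set.mem_Ioi.2 (by positivity))
    simp (disch := positivity) only [Real.log_mul, Real.log_rpow, Real.log_div, Real.log_inv]
    field_simp
    ring
  calc ENNReal.ofReal ((ω / 2) ^ (a / n) * V ^ (1 - a / n))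
      = ENNReal.ofReal ((R ^ a)⁻¹) * ENNReal.ofReal V := by
        rw [hconst, ENNReal.ofReal_mul (by positivity)]
    _ ≤ ENNReal.ofReal ((R ^ a)⁻¹) * μ (ball x R \ S) := by gcongr
    _ = ∫⁻ _ in ball x R \ S, ENNReal.ofReal ((R ^ a)⁻¹) ∂μ := (setLIntegral_const _ _).symm
    _ ≤ ∫⁻ y in ball x R \ S, ENNReal.ofReal ((‖x - y‖ ^ a)⁻¹) ∂μ := by
        refine setLIntegral_mono_ae (by fun_prop) ?_
        filter_upwards [μ.ae_ne x] with y hyx hy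
        have hxy : 0 < ‖x - y‖ := norm_pos_iff.2 (sub_ne_zero.2 hyx.symm)
        have hxyR : ‖x - y‖ < R := by simpa [dist_eq_norm, norm_sub_rev] using hy.1
        gcongr
    _ ≤ ∫⁻ y in Sᶜ, ENNReal.ofReal ((‖x - y‖ ^ a)⁻¹) ∂μ :=
        lintegral_mono_set fun y hy => hy.2

theorem toReal_measure_lt_abs_le_gagliardoLIntegral {u : E → ℝ} (hu : Measurable u) {p a : ℝ}
    (hp : 0 ≤ p) (ha : 0 ≤ a) {t₀ t : ℝ} (ht : t₀ < t) (hfin : μ {x | t₀ < |u x|} ≠ ⊤)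
    (hG : gagliardoLIntegral μ p a u ≠ ⊤) :
    (μ {x | t < |u x|}).toReal ≤
      (gagliardoLIntegral μ p a u).toReal / ((μ (ball 0 1)).toReal / 2) ^ (a / finrank ℝ E) *
        (t - t₀) ^ (-p) * (μ {x | t₀ < |u x|}).toReal ^ (a / finrank ℝ E - 1) := by
  set n : ℝ := (finrank ℝ E : ℝ)
  set G := gagliardoLIntegral μ p a u
  set c := ((μ (ball (0 : E) 1)).toReal / 2) ^ (a / n)
  have hc : 0 < c := by have := toReal_measure_ball_pos μ (0 : E) one_pos; positivity
  rcases eq_or_ne (μ {x | t₀ < |u x|}) 0 with h0 | h0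
  · have hnull : μ {x | t < |u x|} = 0 := measure_mono_null (fun x hx => ht.trans hx) h0
    rw [hnull, ENNReal.toReal_zero]
    positivity
  set V := (μ {x | t₀ < |u x|}).toReal
  have hV : 0 < V := ENNReal.toReal_pos h0 hfin
  have hgap : 0 < t - t₀ := sub_pos.2 ht
  set w := (t - t₀) ^ p * (c * V ^ (1 - a / n)) with hw_def
  have hw : 0 < w := by positivity
  have hkey : ENNReal.ofReal w * μ {x | t < |u x|} ≤ G := calc
    _ = ∫⁻ _ in {x | t < |u x|},
          ENNReal.ofReal ((t - t₀) ^ p) * ENNReal.ofReal (c * V ^ (1 - a / n)) ∂μ := by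
        rw [setLIntegral_const, ENNReal.ofReal_mul (by positivity)]
    _ ≤ ∫⁻ x in {x | t < |u x|}, ENNReal.ofReal ((t - t₀) ^ p) *
          ∫⁻ y in {y | t₀ < |u y|}ᶜ, ENNReal.ofReal ((‖x - y‖ ^ a)⁻¹) ∂μ ∂μ := by
        gcongr with x
        exact ofReal_mul_rpow_le_setLIntegral_compl_inv_norm_rpow μ ha x h0 hfin
    _ = ∫⁻ x in {x | t < |u x|}, ∫⁻ y in {y | t₀ < |u y|}ᶜ,
          ENNReal.ofReal ((t - t₀) ^ p * (‖x - y‖ ^ a)⁻¹) ∂μ ∂μ := by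
        simp_rw [← lintegral_const_mul' _ _ ENNReal.ofReal_ne_top,
          ← ENNReal.ofReal_mul (by positivity : 0 ≤ (t - t₀) ^ p)]
    _ ≤ G := setLIntegral_levelSet_le_gagliardoLIntegral μ hu hp a ht.le
  have hreal := ENNReal.toReal_mono hG hkey
  rw [ENNReal.toReal_mul, ENNReal.toReal_ofReal hw.le] at hreal
  calc (μ {x | t < |u x|}).toReal ≤ G.toReal / w := by rw [le_div_iff₀ hw, mul_comm]; exact hreal
    _ = _ := by
      rw [Real.rpow_neg hgap.le, show a / n - 1 = -(1 - a / n) by ring,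
        Real.rpow_neg hV.le, hw_def]
      field_simp

theorem exists_toReal_eLpNormEssSup_rpow_le {s p : ℝ} (hp : 0 < p)
    (hsp : (finrank ℝ E : ℝ) < s * p) :
    ∃ C : ℝ, 0 < C ∧ ∀ u : E → ℝ, Measurable u → μ (support u) ≠ ⊤ →
      gagliardoLIntegral μ p (finrank ℝ E + s * p) u ≠ ⊤ →
      (eLpNormEssSup u μ).toReal ^ p ≤ C * (μ (support u)).toReal ^ (s * p / finrank ℝ E - 1) *
        (gagliardoLIntegral μ p (finrank ℝ E + s * p) u).toReal := by
  set n : ℝ := (finrank ℝ E : ℝ)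
  have hn : 0 < n := Nat.cast_pos.2 finrank_pos
  set a := n + s * p with ha_def
  set β := s * p / n with hβ_def
  have ha : 0 < a := by rw [ha_def]; linarith
  have hβ : 1 < β := (one_lt_div hn).2 hsp
  have hβa : a / n - 1 = β := by rw [ha_def, hβ_def]; field_simp; ring
  set c := ((μ (ball (0 : E) 1)).toReal / 2) ^ (a / n)
  have hc : 0 < c := by have := toReal_measure_ball_pos μ (0 : E) one_pos; positivity
  refine ⟨2 ^ (p * β / (β - 1)) / c, by positivity, fun u hu hsupp hG => ?_⟩
  set G := gagliardoLIntegral μ p a u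
  set K := G.toReal / c
  set A := (μ (support u)).toReal
  have hfin (t : ℝ) (ht : 0 ≤ t) : μ {x | t < |u x|} ≠ ⊤ :=
    ne_top_of_le_ne_top hsupp (measure_lt_abs_le_measure_support ht)
  have hlevel_zero : {x | 0 < |u x|} = support u := by ext; simp [abs_pos]
  have hψ0 : (μ {x | 0 < |u x|}).toReal ≤ A := by rw [hlevel_zero]
  have hzero (t : ℝ) (ht : (K * A ^ (β - 1) * 2 ^ (p * β / (β - 1))) ^ (1 / p) < t) :
      (μ {x | t < |u x|}).toReal = 0 := by
    refine eq_zero_of_deGiorgi_recursion (ψ := fun t => (μ {x | t < |u x|}).toReal) hp hβ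
      (by positivity) ENNReal.toReal_nonneg (fun _ => ENNReal.toReal_nonneg)
      (antitoneOn_toReal_measure_lt_abs hsupp) hψ0 (fun t₀ t ht₀ ht => ?_) ht
    convert toReal_measure_lt_abs_le_gagliardoLIntegral μ hu hp.le ha.le ht (hfin t₀ ht₀) hG
      using 2
    exact congrArg _ hβa.symm
  set d := (K * A ^ (β - 1) * 2 ^ (p * β / (β - 1))) ^ (1 / p) with hd_def
  have hd : 0 ≤ d := by positivity
  have hess : (eLpNormEssSup u μ).toReal ≤ d :=
    toReal_eLpNormEssSup_le_of_measure_lt_abs_eq_zero hd fun t ht =>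
      ((ENNReal.toReal_eq_zero_iff _).1 (hzero t ht)).resolve_right (hfin t (hd.trans ht.le))
  calc (eLpNormEssSup u μ).toReal ^ p ≤ d ^ p := by gcongr
    _ = 2 ^ (p * β / (β - 1)) / c * A ^ (β - 1) * G.toReal := by
      rw [hd_def, one_div, Real.rpow_inv_rpow (by positivity) hp.ne']
      ring

end Haar

theorem gagliardoP_eq_toReal_gagliardoLIntegral {n : ℕ} {s p : ℝ}
    {u : EuclideanSpace ℝ (Fin n) → ℝ} (hu : Measurable u) :
    gagliardoP n s p u = (gagliardoLIntegral volume p (n + s * p) u).toReal := by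
  rw [gagliardoP, integral_eq_lintegral_of_nonneg_ae (ae_of_all _ fun q => by positivity)
    (hu.abs_sub_rpow_div_norm_sub_rpow p _).aestronglyMeasurable, Measure.volume_eq_prod,
    lintegral_prod_eq_gagliardoLIntegral _ hu]

theorem stmt16_general (n : ℕ) (hn : 0 < n) (s p : ℝ) (hp : 1 < p)
    (hsp : (n : ℝ) < s * p) :
    ∃ C : ℝ, 0 < C ∧
      ∀ (Ω : Set (EuclideanSpace ℝ (Fin n))) (u : EuclideanSpace ℝ (Fin n) → ℝ),
        IsOpen Ω → Bornology.IsBounded Ω →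
        Measurable u →
        (∀ᵐ x, x ∉ Ω → u x = 0) →
        Integrable (fun x => |u x| ^ p) →
        Integrable (fun q : EuclideanSpace ℝ (Fin n) × EuclideanSpace ℝ (Fin n) =>
          |u q.1 - u q.2| ^ p / ‖q.1 - q.2‖ ^ ((n : ℝ) + s * p)) →
        (eLpNormEssSup u (volume.restrict Ω)).toReal ^ p
          ≤ C * (volume Ω).toReal ^ (s * p / n - 1) * gagliardoP n s p u := by
  have : Nontrivial (EuclideanSpace ℝ (Fin n)) :=
    Module.finrank_pos_iff.1 (by rwa [finrank_euclideanSpace_fin])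
  obtain ⟨C, hC, hbound⟩ := exists_toReal_eLpNormEssSup_rpow_le
    (volume : Measure (EuclideanSpace ℝ (Fin n))) (s := s) (p := p) (by linarith)
    (by rwa [finrank_euclideanSpace_fin])
  rw [finrank_euclideanSpace_fin] at hbound
  refine ⟨C, hC, fun Ω u hΩ hΩb hu hvan _ hint => ?_⟩
  have hΩfin : volume Ω ≠ ⊤ := hΩb.measure_lt_top.ne
  have hsupp := measure_support_le_of_ae_eq_zero hvan
  have hG : gagliardoLIntegral volume p (n + s * p) u ≠ ⊤ := by
    rw [← lintegral_prod_eq_gagliardoLIntegral _ hu, ← Measure.volume_eq_prod]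
    exact hint.lintegral_lt_top.ne
  rw [eLpNormEssSup_restrict_eq_of_ae_eq_zero hΩ.measurableSet hvan,
    gagliardoP_eq_toReal_gagliardoLIntegral hu]
  calc _ ≤ C * (volume (support u)).toReal ^ (s * p / n - 1) *
        (gagliardoLIntegral volume p (n + s * p) u).toReal :=
        hbound u hu (ne_top_of_le_ne_top hΩfin hsupp) hG
    _ ≤ _ := by
        have : 0 ≤ s * p / n - 1 := sub_nonneg.2 ((one_le_div (by exact_mod_cast hn)).2 hsp.le)
        gcongr

theorem stmt16 (n : ℕ) (hn : 0 < n) (s p : ℝ) (hs0 : 0 < s) (hs1 : s < 1) (hp : 1 < p)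
    (hsp : (n : ℝ) < s * p) :
    ∃ C : ℝ, 0 < C ∧
      ∀ (Ω : Set (EuclideanSpace ℝ (Fin n))) (u : EuclideanSpace ℝ (Fin n) → ℝ),
        IsOpen Ω → Bornology.IsBounded Ω →
        Measurable u →
        (∀ᵐ x, x ∉ Ω → u x = 0) →
        Integrable (fun x => |u x| ^ p) →
        Integrable (fun q : EuclideanSpace ℝ (Fin n) × EuclideanSpace ℝ (Fin n) =>
          |u q.1 - u q.2| ^ p / ‖q.1 - q.2‖ ^ ((n : ℝ) + s * p)) →
        (eLpNormEssSup u (volume.restrict Ω)).toReal ^ p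
          ≤ C * (volume Ω).toReal ^ (s * p / n - 1) * gagliardoP n s p u :=
  stmt16_general n hn s p hp hsp
end
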